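/- arXiv:2603.04704 — 5 statements merged into one kernel-verified Lean document; each statement's English description precedes it below -/
import Mathlib

section
/- For every finite complete bipartite graph G with both parts nonempty and every spanning edge-coloring of G with 2 colors, the vertex set of G can be covered by at most 2 monochromatic connected components. -/
/-!
Fix a vertex `x`. If some `x'` on the side of `x` disagrees in color with `x` on every edge to
the other side, then, there being only two colors, every vertex across is joined in color `0`
to `x` or to `x'`, and every vertex on the side of `x` reaches the other side by an edge of
color `0`; so the `0`-components of `x` and `x'` cover. Otherwise every `x'` on the side of `x`
has a common neighbour `y` with `χ x' y = χ x y`, which puts `x'` in the component of `x` of that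
color; so the two components of `x` cover.
-/

/-- In a bipartite graph with side-assignment `side` and edge-coloring `χ`,
`u` and `v` lie in the same monochromatic component of color `c`:
they are joined by a (possibly empty) walk of edges of color `c`. -/
def SameCompBip {V K : Type*} (side : V → Bool) (χ : V → V → K)
    (c : K) (u v : V) : Prop :=
  Relation.ReflTransGen (fun a b => side a ≠ side b ∧ χ a b = c) u v

namespace SameCompBip

variable {V K : Type*} {side : V → Bool} {χ : V → V → K} {c : K} {u v w : V}

lemma single (h : side u ≠ side v) (hc : χ u v = c) : SameCompBip side χ c u v :=
  Relation.ReflTransGen.single ⟨h, hc⟩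

lemma head (h : side u ≠ side v) (hc : χ u v = c) (hvw : SameCompBip side χ c v w) :
    SameCompBip side χ c u w :=
  Relation.ReflTransGen.head ⟨h, hc⟩ hvw

end SameCompBip

section Cover

variable {V : Type*} {side : V → Bool} {x : V}

lemma sameCompBip_or_of_forall_ne {χ : V → V → Fin 2} {c : Fin 2} {x' : V}
    (hx' : side x' = side x) (hne : ∀ y, side y ≠ side x → χ x' y ≠ χ x y)
    (hsym : ∀ u v, χ u v = χ v u) (hspan : ∀ v, ∃ w, side w ≠ side v ∧ χ v w = c) (u : V) :
    SameCompBip side χ c u x ∨ SameCompBip side χ c u x' := by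
  have across : ∀ y, side y ≠ side x →
      SameCompBip side χ c y x ∨ SameCompBip side χ c y x' := by
    intro y hy
    by_cases hxy : χ x y = c
    · exact .inl (.single hy ((hsym y x).trans hxy))
    · have hx'y : χ x' y = c := by
        have := hne y hy
        omega
      exact .inr (.single (hx' ▸ hy) ((hsym y x').trans hx'y))
  by_cases hu : side u = side x
  · obtain ⟨w, hw, hcw⟩ := hspan u
    exact (across w (hu ▸ hw)).imp (.head hw.symm hcw) (.head hw.symm hcw)
  · exact across u hu

lemma exists_sameCompBip_of_forall_exists_eq {K : Type*} {χ : V → V → K}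
    (hsym : ∀ u v, χ u v = χ v u)
    (hmeet : ∀ x', side x' = side x → ∃ y, side y ≠ side x ∧ χ x' y = χ x y) (u : V) :
    ∃ c, SameCompBip side χ c u x := by
  by_cases hu : side u = side x
  · obtain ⟨y, hy, hcy⟩ := hmeet u hu
    exact ⟨χ x y, .head (hu ▸ hy.symm) hcy (.single hy (hsym y x))⟩
  · exact ⟨χ x u, .single hu (hsym u x)⟩

end Cover

theorem cov_two_colors_general (V : Type*) (side : V → Bool)
    (hX : ∃ v, side v = true)
    (χ : V → V → Fin 2) (hsym : ∀ u v, χ u v = χ v u)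
    (hspan : ∀ (v : V) (c : Fin 2), ∃ w, side w ≠ side v ∧ χ v w = c) :
    ∃ S : Finset (Fin 2 × V), S.card ≤ 2 ∧
      ∀ u : V, ∃ q ∈ S, SameCompBip side χ q.1 u q.2 := by
  classical
  obtain ⟨x, -⟩ := hX
  by_cases hopp : ∃ x', side x' = side x ∧ ∀ y, side y ≠ side x → χ x' y ≠ χ x y
  · obtain ⟨x', hx', hne⟩ := hopp
    refine ⟨{(0, x), (0, x')}, Finset.card_le_two, fun u => ?_⟩
    rcases sameCompBip_or_of_forall_ne hx' hne hsym (hspan · 0) u with h | h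
    · exact ⟨(0, x), by simp, h⟩
    · exact ⟨(0, x'), by simp, h⟩
  · push Not at hopp
    refine ⟨{(0, x), (1, x)}, Finset.card_le_two, fun u => ?_⟩
    obtain ⟨c, hc⟩ := exists_sameCompBip_of_forall_exists_eq hsym hopp u
    exact ⟨(c, x), by fin_cases c <;> simp, hc⟩

/-- Every spanning 2-edge-coloring of a complete bipartite graph admits a cover of
its vertex set by at most 2 monochromatic components. -/
theorem cov_two_colors (V : Type*) [Fintype V] (side : V → Bool)
    (hX : ∃ v, side v = true) (hY : ∃ v, side v = false)
    (χ : V → V → Fin 2) (hsym : ∀ u v, χ u v = χ v u)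
    (hspan : ∀ (v : V) (c : Fin 2), ∃ w, side w ≠ side v ∧ χ v w = c) :
    ∃ S : Finset (Fin 2 × V), S.card ≤ 2 ∧
      ∀ u : V, ∃ q ∈ S, SameCompBip side χ q.1 u q.2 :=
  cov_two_colors_general V side hX χ hsym hspan
end

section
/- Let t ≥ r ≥ 3 and let H be a finite complete r-partite r-uniform hypergraph (all parts nonempty) with a spanning edge-coloring using r+t colors such that the vertex set of H cannot be covered by t+1 or fewer monochromatic components. Then for every color c and every part V_i, there exist t+2 vertices v_1, …, v_{t+2} ∈ V_i lying in pairwise distinct monochromatic components of color c. -/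
/-- An edge of the complete r-partite r-uniform hypergraph with part assignment `p`
is a transversal: a choice of one vertex from each part. -/
def IsTransversal {V : Type*} {r : ℕ} (p : V → Fin r) (e : Fin r → V) : Prop :=
  ∀ i, p (e i) = i

/-- `u` and `v` lie in the same monochromatic component of color `c`:
they are joined by a (possibly empty) sequence of edges of color `c`
in which consecutive edges intersect. -/
def SameComp {V : Type*} {r k : ℕ} (p : V → Fin r) (χ : (Fin r → V) → Fin k)
    (c : Fin k) (u v : V) : Prop :=
  Relation.ReflTransGen
    (fun a b => ∃ e, IsTransversal p e ∧ χ e = c ∧ (∃ i, e i = a) ∧ (∃ j, e j = b)) u v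

/-- The coloring is spanning: every vertex is contained in an edge of every color. -/
def SpanningColoring {V : Type*} {r k : ℕ} (p : V → Fin r)
    (χ : (Fin r → V) → Fin k) : Prop :=
  ∀ (v : V) (c : Fin k), ∃ e, IsTransversal p e ∧ χ e = c ∧ ∃ i, e i = v

/-- The vertex set can be covered by at most `m` monochromatic components;
a component is recorded as a pair (color, representative vertex). -/
def CoveredByComponents {V : Type*} {r k : ℕ} (p : V → Fin r)
    (χ : (Fin r → V) → Fin k) (m : ℕ) : Prop :=
  ∃ S : Finset (Fin k × V), S.card ≤ m ∧
    ∀ u : V, ∃ q ∈ S, SameComp p χ q.1 u q.2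

lemma sameComp_equivalence {V : Type*} {r k : ℕ} (p : V → Fin r)
    (χ : (Fin r → V) → Fin k) (c : Fin k) : Equivalence (SameComp p χ c) := by
  refine ⟨fun x => Relation.ReflTransGen.refl, ?_, fun h1 h2 => h1.trans h2⟩
  intro x y h
  refine (@Relation.ReflTransGen.stdSymm _ _ ⟨?_⟩).symm _ _ h
  rintro a b ⟨e, he, hc, hi, hj⟩
  exact ⟨e, he, hc, hj, hi⟩

/-- If V(H) cannot be covered by t+1 monochromatic components, then every part
contains t+2 vertices in pairwise distinct components of any given color. -/
theorem claim_samepart_diffcomp (r t : ℕ) (hr : 3 ≤ r) (hrt : r ≤ t)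
    (V : Type*) [Fintype V] (p : V → Fin r) (hp : Function.Surjective p)
    (χ : (Fin r → V) → Fin (r + t))
    (hspan : SpanningColoring p χ)
    (hncov : ¬ CoveredByComponents p χ (t + 1))
    (c : Fin (r + t)) (i : Fin r) :
    ∃ v : Fin (t + 2) → V, (∀ m, p (v m) = i) ∧
      ∀ m n, m ≠ n → ¬ SameComp p χ c (v m) (v n) := by
  classical
  let s : Setoid {v : V // p v = i} :=
    ⟨fun a b => SameComp p χ c a.1 b.1,
      ⟨fun x => (sameComp_equivalence p χ c).refl x.1,
       fun h => (sameComp_equivalence p χ c).symm h,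
       fun h1 h2 => (sameComp_equivalence p χ c).trans h1 h2⟩⟩
  by_cases hcard : t + 2 ≤ Fintype.card (Quotient s)
  · rw [← Fintype.card_fin (t + 2)] at hcard
    obtain ⟨f⟩ := Function.Embedding.nonempty_of_card_le hcard
    refine ⟨fun m => ((f m).out).1, fun m => ((f m).out).2, ?_⟩
    intro m n hmn hsc
    apply hmn
    apply f.injective
    have h : (f m).out ≈ (f n).out := hsc
    calc f m = ⟦(f m).out⟧ := (Quotient.out_eq _).symm
      _ = ⟦(f n).out⟧ := Quotient.sound h
      _ = f n := Quotient.out_eq _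
  · push_neg at hcard
    exfalso
    apply hncov
    refine ⟨Finset.univ.image (fun q : Quotient s => (c, q.out.1)), ?_, ?_⟩
    · calc (Finset.univ.image (fun q : Quotient s => (c, q.out.1))).card
          ≤ Finset.univ.card := Finset.card_image_le
        _ = Fintype.card (Quotient s) := Finset.card_univ
        _ ≤ t + 1 := by omega
    · intro u
      obtain ⟨e, he, hce, j, hj⟩ := hspan u c
      have hpi : p (e i) = i := he i
      refine ⟨(c, ((⟦(⟨e i, hpi⟩ : {v : V // p v = i})⟧ : Quotient s).out).1), ?_, ?_⟩
      · exact Finset.mem_image_of_mem _ (Finset.mem_univ _)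
      · have h1 : SameComp p χ c u (e i) :=
          Relation.ReflTransGen.single ⟨e, he, hce, ⟨j, hj⟩, ⟨i, rfl⟩⟩
        have h2 : (⟦(⟨e i, hpi⟩ : {v : V // p v = i})⟧ : Quotient s).out
            ≈ (⟨e i, hpi⟩ : {v : V // p v = i}) := Quotient.mk_out _
        exact h1.trans ((sameComp_equivalence p χ c).symm h2)
end

section
/- Let t ≥ r ≥ 3 and let H be a finite complete r-partite r-uniform hypergraph (all parts nonempty) with a spanning edge-coloring using r+t colors such that the vertex set of H cannot be covered by t+1 or fewer monochromatic components. Then there exist two vertices u and v belonging to different parts of H such that the number of colors c for which u and v lie in different monochromatic components of color c is at least r. -/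
lemma sameComp_symm {V : Type*} {r k : ℕ} (p : V → Fin r) (χ : (Fin r → V) → Fin k)
    (c : Fin k) {u v : V} (h : SameComp p χ c u v) : SameComp p χ c v u := by
  refine (@Relation.ReflTransGen.stdSymm _ _ ⟨?_⟩).symm _ _ h
  intro a b ⟨e, he, hc, hi, hj⟩
  exact ⟨e, he, hc, hj, hi⟩

lemma sameComp_trans {V : Type*} {r k : ℕ} (p : V → Fin r) (χ : (Fin r → V) → Fin k)
    (c : Fin k) {u v w : V} (h1 : SameComp p χ c u v) (h2 : SameComp p χ c v w) :
    SameComp p χ c u w :=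
  Relation.ReflTransGen.trans h1 h2

/-- If V(H) cannot be covered by t+1 monochromatic components, then some two vertices
in different parts differ in at least r colors. -/
theorem claim_large_distance (r t : ℕ) (hr : 3 ≤ r) (hrt : r ≤ t)
    (V : Type*) [Fintype V] (p : V → Fin r) (hp : Function.Surjective p)
    (χ : (Fin r → V) → Fin (r + t))
    (hspan : SpanningColoring p χ)
    (hncov : ¬ CoveredByComponents p χ (t + 1)) :
    ∃ u v : V, p u ≠ p v ∧
      r ≤ Set.ncard {c : Fin (r + t) | ¬ SameComp p χ c u v} := by
  classical
  by_contra hcon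
  push_neg at hcon
  -- key: any two vertices in different parts agree in at least t+1 colors
  have key : ∀ a b : V, p a ≠ p b →
      t + 1 ≤ (Finset.univ.filter (fun c => SameComp p χ c a b)).card := by
    intro a b hab
    have h1 := hcon a b hab
    have h2 : {c : Fin (r + t) | ¬ SameComp p χ c a b}.ncard
        = (Finset.univ.filter (fun c => ¬ SameComp p χ c a b)).card := by
      rw [Set.ncard_eq_toFinset_card']
      congr 1
      ext c
      simp
    have h3 := Finset.card_filter_add_card_filter_not
      (s := (Finset.univ : Finset (Fin (r + t))))
      (p := fun c => SameComp p χ c a b)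
    simp only [Finset.card_univ, Fintype.card_fin] at h3
    omega
  -- find two vertices in different parts
  obtain ⟨u, hu⟩ := hp ⟨0, by omega⟩
  obtain ⟨v, hv⟩ := hp ⟨1, by omega⟩
  have huv : p u ≠ p v := by
    rw [hu, hv]
    intro h
    exact absurd (Fin.mk.injEq .. ▸ h) (by omega)
  -- select t+1 colors where u and v agree
  obtain ⟨A, hAsub, hAcard⟩ := Finset.exists_subset_card_eq
    (s := Finset.univ.filter (fun c => SameComp p χ c u v)) (n := t + 1) (key u v huv)
  -- the intersection argument
  have inter : ∀ a b : V, p a ≠ p b →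
      ∃ c ∈ A, SameComp p χ c a b := by
    intro a b hab
    have hk := key a b hab
    by_contra h
    push_neg at h
    have hdisj : Disjoint A (Finset.univ.filter (fun c => SameComp p χ c a b)) := by
      rw [Finset.disjoint_left]
      intro c hc hc'
      exact h c hc (Finset.mem_filter.mp hc').2
    have := Finset.card_union_of_disjoint hdisj
    have hle : (A ∪ Finset.univ.filter (fun c => SameComp p χ c a b)).card
        ≤ r + t := by
      calc _ ≤ (Finset.univ : Finset (Fin (r + t))).card := Finset.card_le_card
              (Finset.subset_univ _)
        _ = r + t := by simp
    omega
  apply hncov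
  refine ⟨A.image (fun c => (c, u)), ?_, ?_⟩
  · calc (A.image (fun c => (c, u))).card ≤ A.card := Finset.card_image_le
      _ ≤ t + 1 := by omega
  · intro w
    by_cases hw : p w = p u
    · -- go through v
      have hwv : p w ≠ p v := hw ▸ huv
      obtain ⟨c, hcA, hcs⟩ := inter w v hwv
      refine ⟨(c, u), Finset.mem_image_of_mem _ hcA, ?_⟩
      have hcu : SameComp p χ c u v := (Finset.mem_filter.mp (hAsub hcA)).2
      exact sameComp_trans p χ c hcs (sameComp_symm p χ c hcu)
    · obtain ⟨c, hcA, hcs⟩ := inter w u hw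
      exact ⟨(c, u), Finset.mem_image_of_mem _ hcA, hcs⟩
end

section
/- Let H be a finite intersecting r-partite r-uniform hypergraph with parts V_1, …, V_r, meaning every edge of H contains exactly one vertex from each part and every two edges of H have nonempty intersection. Let G_H be the complete graph on vertex set E(H), and color each pair {e, f} of distinct edges of H by the smallest index i ∈ {1, …, r} such that e ∩ f ∩ V_i ≠ ∅. If the vertex set of G_H can be covered by k monochromatic connected components of this r-edge-coloring, then H has a vertex cover of size at most k (a set S of vertices of H such that every edge of H meets S). -/
/-!
All edges in one monochromatic component of color `i` share their vertex in part `V_i`, since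
every edge of the component meets its neighbours there. Picking, for each component of the
covering family, this common vertex gives a vertex cover with one vertex per component.
-/

theorem Relation.ReflTransGen.apply_eq {α β : Type*} {r : α → α → Prop} (f : α → β)
    (h : ∀ a b, r a b → f a = f b) {a b : α} (hab : Relation.ReflTransGen r a b) :
    f a = f b := by
  simpa only [Relation.reflTransGen_eq_self] using hab.lift f h

theorem apply_eq_of_mem_monochromatic_component {ι V : Type*} {E : Finset (ι → V)}
    {col : (ι → V) → (ι → V) → ι}
    (hcol : ∀ e ∈ E, ∀ f ∈ E, e ≠ f → e (col e f) = f (col e f)) {i : ι} {a b : {e // e ∈ E}}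
    (hab : Relation.ReflTransGen (fun x y : {e // e ∈ E} => x ≠ y ∧ col x.1 y.1 = i) a b) :
    a.1 i = b.1 i :=
  hab.apply_eq (fun x => x.1 i) fun x y ⟨hne, hxy⟩ =>
    hxy ▸ hcol x.1 x.2 y.1 y.2 (Subtype.coe_injective.ne hne)

theorem intersecting_cover_from_components_general (r : ℕ) (V : Type*)
    (E : Finset (Fin r → V))
    (col : (Fin r → V) → (Fin r → V) → Fin r)
    (hcol : ∀ e ∈ E, ∀ f ∈ E, e ≠ f →
      e (col e f) = f (col e f) ∧ ∀ i, i < col e f → e i ≠ f i)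
    (k : ℕ) (T : Finset (Fin r × {e // e ∈ E})) (hTcard : T.card ≤ k)
    (hTcover : ∀ a : {e // e ∈ E}, ∃ q ∈ T,
      Relation.ReflTransGen
        (fun x y : {e // e ∈ E} => x ≠ y ∧ col x.1 y.1 = q.1) a q.2) :
    ∃ S : Finset V, S.card ≤ k ∧ ∀ e ∈ E, ∃ s ∈ S, ∃ i, e i = s := by
  classical
  refine ⟨T.image fun q => q.2.1 q.1, Finset.card_image_le.trans hTcard, fun e he => ?_⟩
  obtain ⟨q, hqT, hq⟩ := hTcover ⟨e, he⟩
  exact ⟨q.2.1 q.1, Finset.mem_image_of_mem _ hqT, q.1,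
    apply_eq_of_mem_monochromatic_component (fun e he f hf hne => (hcol e he f hf hne).1) hq⟩

/-- From a covering of the colored complete graph G_H on the edge set of an
intersecting r-partite r-uniform hypergraph H by k monochromatic components,
one obtains a vertex cover of H of size at most k. Here p assigns each vertex its
part, E is the edge set (each edge a transversal, i.e. one vertex per part),
and col e f is the least index i with e and f meeting in part V_i. -/
theorem intersecting_cover_from_components (r : ℕ) (V : Type*)
    (p : V → Fin r) (E : Finset (Fin r → V))
    (hE : ∀ e ∈ E, ∀ i, p (e i) = i)
    (hint : ∀ e ∈ E, ∀ f ∈ E, ∃ i, e i = f i)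
    (col : (Fin r → V) → (Fin r → V) → Fin r)
    (hcol : ∀ e ∈ E, ∀ f ∈ E, e ≠ f →
      e (col e f) = f (col e f) ∧ ∀ i, i < col e f → e i ≠ f i)
    (k : ℕ) (T : Finset (Fin r × {e // e ∈ E})) (hTcard : T.card ≤ k)
    (hTcover : ∀ a : {e // e ∈ E}, ∃ q ∈ T,
      Relation.ReflTransGen
        (fun x y : {e // e ∈ E} => x ≠ y ∧ col x.1 y.1 = q.1) a q.2) :
    ∃ S : Finset V, S.card ≤ k ∧ ∀ e ∈ E, ∃ s ∈ S, ∃ i, e i = s :=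
  intersecting_cover_from_components_general r V E col hcol k T hTcard hTcover
end

section
/- Let t ≥ 3 and let H be a finite complete 3-partite 3-uniform hypergraph with nonempty parts V_1, V_2, V_3 and a spanning edge-coloring using t+3 colors. Suppose a ∈ V_1, b ∈ V_2, c ∈ V_3 are vertices such that there are at least two colors j for which a, b, c lie in three pairwise distinct monochromatic components of color j. Then the vertex set of H can be covered by at most t+1 monochromatic components; in fact, it is covered by the family of all monochromatic components containing at least two of the three vertices a, b, c, and this family has size at most t+1. -/
/-- If a transversal a, b, c has at least two distinguishing colors, then V(H) is
covered by the family of monochromatic components containing at least two of a, b, c,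
and this family has size at most t+1; in particular V(H) is covered by at most t+1
monochromatic components. -/
theorem claim_two_distinguishing_covers (t : ℕ) (ht : 3 ≤ t)
    (V : Type*) [Fintype V] (p : V → Fin 3) (hp : Function.Surjective p)
    (χ : (Fin 3 → V) → Fin (t + 3))
    (hspan : SpanningColoring p χ)
    (a b c : V) (ha : p a = 0) (hb : p b = 1) (hc : p c = 2)
    (hdist : ∃ j₁ j₂ : Fin (t + 3), j₁ ≠ j₂ ∧
      (¬ SameComp p χ j₁ a b ∧ ¬ SameComp p χ j₁ b c ∧ ¬ SameComp p χ j₁ a c) ∧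
      (¬ SameComp p χ j₂ a b ∧ ¬ SameComp p χ j₂ b c ∧ ¬ SameComp p χ j₂ a c)) :
    (∀ u : V, ∃ j : Fin (t + 3),
        (SameComp p χ j u a ∧ SameComp p χ j u b) ∨
        (SameComp p χ j u b ∧ SameComp p χ j u c) ∨
        (SameComp p χ j u a ∧ SameComp p χ j u c)) ∧
    Set.ncard {j : Fin (t + 3) |
        SameComp p χ j a b ∨ SameComp p χ j b c ∨ SameComp p χ j a c} ≤ t + 1 ∧
    CoveredByComponents p χ (t + 1) := by
  classical
  obtain ⟨j₁, j₂, hne, ⟨h1ab, h1bc, h1ac⟩, ⟨h2ab, h2bc, h2ac⟩⟩ := hdist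
  have hsymm : ∀ (j : Fin (t+3)) {x y : V}, SameComp p χ j x y → SameComp p χ j y x := by
    intro j x y h
    refine (@Relation.ReflTransGen.symmetric _ _ ⟨?_⟩).symm _ _ h
    rintro w z ⟨e, he, hce, hi, hj⟩
    exact ⟨e, he, hce, hj, hi⟩
  -- Part 1
  have part1 : ∀ u : V, ∃ j : Fin (t + 3),
      (SameComp p χ j u a ∧ SameComp p χ j u b) ∨
      (SameComp p χ j u b ∧ SameComp p χ j u c) ∨
      (SameComp p χ j u a ∧ SameComp p χ j u c) := by
    intro u
    generalize hu : p u = i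
    fin_cases i
    · -- u in part 0 : edge (u, b, c)
      have htr : IsTransversal p ![u, b, c] := by
        intro i; fin_cases i <;> simp [hu, hb, hc]
      exact ⟨χ ![u, b, c], Or.inr (Or.inl
        ⟨Relation.ReflTransGen.single ⟨_, htr, rfl, ⟨0, rfl⟩, ⟨1, rfl⟩⟩,
         Relation.ReflTransGen.single ⟨_, htr, rfl, ⟨0, rfl⟩, ⟨2, rfl⟩⟩⟩)⟩
    · -- u in part 1 : edge (a, u, c)
      have htr : IsTransversal p ![a, u, c] := by
        intro i; fin_cases i <;> simp [hu, ha, hc]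
      exact ⟨χ ![a, u, c], Or.inr (Or.inr
        ⟨Relation.ReflTransGen.single ⟨_, htr, rfl, ⟨1, rfl⟩, ⟨0, rfl⟩⟩,
         Relation.ReflTransGen.single ⟨_, htr, rfl, ⟨1, rfl⟩, ⟨2, rfl⟩⟩⟩)⟩
    · -- u in part 2 : edge (a, b, u)
      have htr : IsTransversal p ![a, b, u] := by
        intro i; fin_cases i <;> simp [hu, ha, hb]
      exact ⟨χ ![a, b, u], Or.inl
        ⟨Relation.ReflTransGen.single ⟨_, htr, rfl, ⟨2, rfl⟩, ⟨0, rfl⟩⟩,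
         Relation.ReflTransGen.single ⟨_, htr, rfl, ⟨2, rfl⟩, ⟨1, rfl⟩⟩⟩⟩
  -- The set of colors with a component containing two of a, b, c
  set D : Finset (Fin (t+3)) := Finset.univ.filter
    (fun j => SameComp p χ j a b ∨ SameComp p χ j b c ∨ SameComp p χ j a c) with hD
  have hDsub : D ⊆ Finset.univ \ {j₁, j₂} := by
    intro j hj
    simp only [hD, Finset.mem_filter, Finset.mem_univ, true_and] at hj
    simp only [Finset.mem_sdiff, Finset.mem_univ, true_and, Finset.mem_insert,
      Finset.mem_singleton]
    rintro (rfl | rfl) <;> tauto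
  have hDcard : D.card ≤ t + 1 := by
    have h2 : ({j₁, j₂} : Finset (Fin (t+3))).card = 2 := Finset.card_pair hne
    have := Finset.card_le_card hDsub
    rw [Finset.card_sdiff_of_subset (by simp), h2, Finset.card_univ, Fintype.card_fin] at this
    omega
  refine ⟨part1, ?_, ?_⟩
  · have hset : {j : Fin (t + 3) |
        SameComp p χ j a b ∨ SameComp p χ j b c ∨ SameComp p χ j a c} = ↑D := by
      ext j; simp [hD]
    rw [hset, Set.ncard_coe_finset]
    exact hDcard
  · -- the cover
    set rep : Fin (t+3) → V :=
      fun j => if SameComp p χ j a b ∨ SameComp p χ j a c then a else b with hrep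
    refine ⟨D.image (fun j => (j, rep j)), le_trans Finset.card_image_le hDcard, ?_⟩
    intro u
    obtain ⟨j, hcase⟩ := part1 u
    have hjD : j ∈ D := by
      simp only [hD, Finset.mem_filter, Finset.mem_univ, true_and]
      rcases hcase with ⟨h1, h2⟩ | ⟨h1, h2⟩ | ⟨h1, h2⟩
      · exact Or.inl ((hsymm j h1).trans h2)
      · exact Or.inr (Or.inl ((hsymm j h1).trans h2))
      · exact Or.inr (Or.inr ((hsymm j h1).trans h2))
    refine ⟨(j, rep j), Finset.mem_image_of_mem _ hjD, ?_⟩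
    show SameComp p χ j u (rep j)
    by_cases hr : SameComp p χ j a b ∨ SameComp p χ j a c
    · rw [hrep]; simp only [if_pos hr]
      rcases hcase with ⟨h1, _⟩ | ⟨h1, h2⟩ | ⟨h1, _⟩
      · exact h1
      · rcases hr with hab | hac
        · exact h1.trans (hsymm j hab)
        · exact h2.trans (hsymm j hac)
      · exact h1
    · rw [hrep]; simp only [if_neg hr]
      rcases hcase with ⟨h1, h2⟩ | ⟨h1, _⟩ | ⟨h1, h2⟩
      · exact absurd (Or.inl ((hsymm j h1).trans h2)) hr
      · exact h1
      · exact absurd (Or.inr ((hsymm j h1).trans h2)) hr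
end
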